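/- arXiv:1706.09276 — 3 statements merged into one kernel-verified Lean document; each statement's English description precedes it below -/
import Mathlib

section
/- Let A be a unital C*-algebra, h = h* ∈ A self-adjoint, and a ∈ A. Then ‖exp(ih)·a·exp(−ih) − a‖ ≤ ‖ha − ah‖. In particular ‖[exp(ih), a]‖ ≤ ‖[h, a]‖. -/
/-!
With `x = i h`, the path `t ↦ exp(t x) a exp(-t x)` runs from `a` to `exp(ih) a exp(-ih)` and
has derivative `exp(t x) [x, a] exp(-t x)`. Since `x` is skew-adjoint, `exp(t x)` is unitary, so
the derivative has norm `‖[h, a]‖` and the mean value inequality gives the first bound. The second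
follows because `[u, a] = (u a u* - a) u` for the unitary `u = exp(ih)`.
-/

open NormedSpace

theorem hasDerivAt_exp_smul_mul_mul_exp_neg_smul {𝕂 𝔸 : Type*} [RCLike 𝕂] [NormedRing 𝔸]
    [NormedAlgebra 𝕂 𝔸] [CompleteSpace 𝔸] (x a : 𝔸) (t : 𝕂) :
    HasDerivAt (fun u : 𝕂 => exp (u • x) * a * exp (-(u • x)))
      (exp (t • x) * (x * a - a * x) * exp (-(t • x))) t := by
  have h := ((hasDerivAt_exp_smul_const x t).mul_const a).mul (hasDerivAt_exp_smul_const' (-x) t)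
  simp only [smul_neg] at h
  exact h.congr_deriv (by noncomm_ring)

theorem norm_exp_mul_mul_exp_neg_sub_le {𝔸 : Type*} [NormedRing 𝔸] [NormedAlgebra ℝ 𝔸]
    [CompleteSpace 𝔸] {x a : 𝔸} {C : ℝ}
    (hC : ∀ t : ℝ, ‖exp (t • x) * (x * a - a * x) * exp (-(t • x))‖ ≤ C) :
    ‖exp x * a * exp (-x) - a‖ ≤ C := by
  simpa using norm_image_sub_le_of_norm_deriv_le_segment_01'
    (fun t _ => (hasDerivAt_exp_smul_mul_mul_exp_neg_smul x a t).hasDerivWithinAt)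
    (fun t _ => hC t)

section CStarRing

variable {E : Type*} [NormedRing E] [StarRing E] [CStarRing E]

theorem norm_mul_mul_star_of_mem_unitary {u : E} (hu : u ∈ unitary E) (a : E) :
    ‖u * a * star u‖ = ‖a‖ := by
  rw [CStarRing.norm_mul_mem_unitary _ (Unitary.star_mem hu), CStarRing.norm_mem_unitary_mul _ hu]

theorem norm_commutator_eq_of_mem_unitary {u : E} (hu : u ∈ unitary E) (a : E) :
    ‖u * a - a * u‖ = ‖u * a * star u - a‖ := by
  have : u * a - a * u = (u * a * star u - a) * u := by
    rw [sub_mul, mul_assoc _ (star u), Unitary.star_mul_self_of_mem hu, mul_one]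
  rw [this, CStarRing.norm_mul_mem_unitary _ hu]

end CStarRing

section CStarAlgebra

variable {A : Type*} [CStarAlgebra A] {h : A}

theorem IsSelfAdjoint.exp_I_smul_mem_unitary (hh : IsSelfAdjoint h) :
    NormedSpace.exp (Complex.I • h) ∈ unitary A :=
  (selfAdjoint.expUnitary ⟨h, hh⟩).prop

theorem IsSelfAdjoint.star_exp_I_smul (hh : IsSelfAdjoint h) :
    star (NormedSpace.exp (Complex.I • h)) = NormedSpace.exp (-(Complex.I • h)) := by
  rw [star_exp, star_smul, hh.star_eq, Complex.star_def, Complex.conj_I, neg_smul]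

end CStarAlgebra

/-- Let `A` be a unital C*-algebra, `h = h* ∈ A`, and `a ∈ A`. Then
`‖exp(ih)·a·exp(−ih) − a‖ ≤ ‖ha − ah‖`; in particular
`‖[exp(ih), a]‖ ≤ ‖[h, a]‖`. -/
theorem norm_exp_conj_sub_le_norm_commutator {A : Type*} [CStarAlgebra A]
    (h a : A) (hh : IsSelfAdjoint h) :
    ‖NormedSpace.exp (Complex.I • h) * a * NormedSpace.exp (-(Complex.I • h)) - a‖ ≤
      ‖h * a - a * h‖ ∧
    ‖NormedSpace.exp (Complex.I • h) * a - a * NormedSpace.exp (Complex.I • h)‖ ≤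
      ‖h * a - a * h‖ := by
  have hconj : ‖exp (Complex.I • h) * a * exp (-(Complex.I • h)) - a‖ ≤ ‖h * a - a * h‖ := by
    refine norm_exp_mul_mul_exp_neg_sub_le fun t => le_of_eq ?_
    have hth : IsSelfAdjoint (t • h) := (IsSelfAdjoint.all t).smul hh
    rw [smul_comm, ← hth.star_exp_I_smul,
      norm_mul_mul_star_of_mem_unitary hth.exp_I_smul_mem_unitary, smul_mul_assoc,
      mul_smul_comm, ← smul_sub, norm_smul, Complex.norm_I, one_mul]
  refine ⟨hconj, ?_⟩
  rwa [norm_commutator_eq_of_mem_unitary hh.exp_I_smul_mem_unitary, hh.star_exp_I_smul]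
end

section
/- Let A be a unital C*-algebra and z ∈ A a unitary. Then there exists a continuous path u : [0,1] → U(M₃(A)) with u(0) = 1, u(1) = diag(z², z*, z*), length ℓ(u) ≤ 4π/3, and such that for every a ∈ A and every t ∈ [0,1] one has ‖[u(t), diag(a,a,a)]‖ ≤ 2‖[z, a]‖. -/
/-!
Let `h` be the self-adjoint scalar matrix with eigenvalues `0, ±2π/3` that is diagonalised by the
`3 × 3` discrete Fourier transform, so that `exp(ih)` is the cyclic permutation matrix `P`, and let
`v = diag(z⋆, z, 1)`. The path is the group commutator `u(t) = ⁅exp(ith), v⁆` of unitaries.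

Since `t ↦ exp(ith)` is `2π/3`-Lipschitz and `w ↦ w v w⋆ v⋆` is `2`-Lipschitz on unitaries, `u` is
`4π/3`-Lipschitz, which bounds its length. At `t = 1`, `P v P⋆ v⋆ = diag(z², z⋆, z⋆)`. Scalar
matrices commute with `diag(a, a, a)`, so `[u(t), a] = w [v, a] w⋆ v⋆ + w v w⋆ [v⋆, a]` with
`w = exp(ith)`, and `‖[v⋆, a]‖ = ‖[v, a]‖ = ‖[z, a]‖`. All norms in `B` of diagonal matrices are
controlled by contractivity of the *-homomorphism `d ↦ φ (diagonal d)` on the sup-normed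
C⋆-algebra `Fin 3 → A`.
-/

open scoped ComplexConjugate commutatorElement
open Complex Matrix Real

namespace Matrix

variable (n R α : Type*) [Fintype n] [DecidableEq n] [CommSemiring R] [Semiring α] [StarRing α]
  [Algebra R α]

def diagonalStarAlgHom : (n → α) →⋆ₐ[R] Matrix n n α where
  __ := diagonalAlgHom R
  map_star' d := (diagonal_conjTranspose d).symm

end Matrix

namespace Unitary

section Monoid

variable {R : Type*} [Monoid R] [StarMul R]

lemma coe_commutatorElement (w v : unitary R) :
    ((⁅w, v⁆ : unitary R) : R) = w * v * star (w : R) * star (v : R) := by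
  simp [commutatorElement_def, ← Unitary.star_eq_inv]

lemma commute_star_left {w : unitary R} {d : R} (h : Commute (w : R) d) :
    Commute (star (w : R)) d :=
  h.units_inv_left (u := Unitary.toUnits w)

end Monoid

variable {C : Type*} [NormedRing C] [StarRing C] [CStarRing C]

lemma norm_star_mul_sub_mul_star (v : unitary C) (d : C) :
    ‖star (v : C) * d - d * star (v : C)‖ = ‖(v : C) * d - d * v‖ := by
  have h : star (v : C) * d - d * star (v : C) =
      star (v : C) * (d * v - v * d) * star (v : C) := by
    calc _ = star (v : C) * d * (v * star (v : C)) - (star (v : C) * v) * d * star (v : C) := by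
          rw [mul_star_self_of_mem v.2, star_mul_self_of_mem v.2, mul_one, one_mul]
      _ = _ := by noncomm_ring
  rw [h, CStarRing.norm_mul_mem_unitary _ (star_mem v.2),
    CStarRing.norm_mem_unitary_mul _ (star_mem v.2), norm_sub_rev]

lemma norm_commutatorElement_sub_le (w w' v : unitary C) :
    ‖((⁅w, v⁆ : unitary C) : C) - ⁅w', v⁆‖ ≤ 2 * ‖(w : C) - w'‖ := by
  rw [coe_commutatorElement, coe_commutatorElement]
  have h : (w : C) * v * star (w : C) * star (v : C) - w' * v * star (w' : C) * star (v : C) =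
      (w - w') * (v * star (w : C) * star (v : C)) +
        w' * (v * (star (w - w' : C) * star (v : C))) := by
    rw [star_sub]; noncomm_ring
  have hv : (v : C) * star (w : C) * star (v : C) ∈ unitary C :=
    mul_mem (mul_mem v.2 (star_mem w.2)) (star_mem v.2)
  calc _ ≤ ‖(w - w' : C) * (v * star (w : C) * star (v : C))‖ +
        ‖(w' : C) * (v * (star (w - w' : C) * star (v : C)))‖ := h ▸ norm_add_le _ _
    _ = 2 * ‖(w : C) - w'‖ := by
      rw [CStarRing.norm_mul_mem_unitary _ hv, CStarRing.norm_mem_unitary_mul _ w'.2,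
        CStarRing.norm_mem_unitary_mul _ v.2,
        CStarRing.norm_mul_mem_unitary _ (star_mem v.2), norm_star, two_mul]

lemma norm_commutatorElement_mul_sub_le {w : unitary C} (v : unitary C) {d : C}
    (hw : Commute (w : C) d) :
    ‖((⁅w, v⁆ : unitary C) : C) * d - d * ⁅w, v⁆‖ ≤ 2 * ‖(v : C) * d - d * v‖ := by
  rw [coe_commutatorElement]
  set x : C := (w : C)
  set y : C := (v : C)
  have e₁ : x * y * star x * d * star y = x * y * d * star x * star y := by
    rw [mul_assoc (x * y), (commute_star_left hw).eq, ← mul_assoc]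
  have e₂ : x * d * y * star x * star y = d * x * y * star x * star y := by
    rw [hw.eq]
  have h : x * y * star x * star y * d - d * (x * y * star x * star y) =
      x * y * star x * (star y * d - d * star y) + x * ((y * d - d * y) * star x * star y) := by
    calc _ = x * y * star x * star y * d - x * y * star x * d * star y +
          (x * y * d * star x * star y - x * d * y * star x * star y) := by
          rw [e₁, e₂]; noncomm_ring
      _ = _ := by noncomm_ring
  have hxyx : x * y * star x ∈ unitary C := mul_mem (mul_mem w.2 v.2) (star_mem w.2)
  calc _ ≤ ‖x * y * star x * (star y * d - d * star y)‖ +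
        ‖x * ((y * d - d * y) * star x * star y)‖ := h ▸ norm_add_le _ _
    _ = 2 * ‖y * d - d * y‖ := by
      rw [CStarRing.norm_mem_unitary_mul _ hxyx, CStarRing.norm_mem_unitary_mul _ w.2,
        mul_assoc, CStarRing.norm_mul_mem_unitary _ (mul_mem (star_mem w.2) (star_mem v.2)),
        norm_star_mul_sub_mul_star, two_mul]

end Unitary

section DiagonalNorm

variable {n α B : Type*} [Fintype n] [DecidableEq n]

def StarAlgHom.mapMatrix {R β : Type*} [CommSemiring R] [Semiring α] [StarRing α] [Algebra R α]
    [Semiring β] [StarRing β] [Algebra R β] (f : α →⋆ₐ[R] β) :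
    Matrix n n α →⋆ₐ[R] Matrix n n β where
  __ := (f : α →ₐ[R] β).mapMatrix
  map_star' M := conjTranspose_map (A := M) f (map_star f)

lemma norm_map_diagonal_le [CStarAlgebra α] [CStarAlgebra B] (ψ : Matrix n n α →⋆ₐ[ℂ] B)
    (d : n → α) : ‖ψ (diagonal d)‖ ≤ ‖d‖ :=
  NonUnitalStarAlgHom.norm_apply_le (ψ.comp (diagonalStarAlgHom n ℂ α)) d

end DiagonalNorm

lemma LipschitzOnWith.eVariationOn_Icc_le {E : Type*} [PseudoEMetricSpace E] {f : ℝ → E}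
    {K : NNReal} {a b : ℝ} (hf : LipschitzOnWith K f (Set.Icc a b)) :
    eVariationOn f (Set.Icc a b) ≤ K * ENNReal.ofReal (b - a) := by
  simpa [eVariationOn_id_Icc] using hf.comp_eVariationOn_le (Set.mapsTo_id _)

lemma Complex.norm_exp_I_mul_ofReal_sub_le (a b : ℝ) :
    ‖exp (I * a) - exp (I * b)‖ ≤ |a - b| := by
  have h : exp (I * a) - exp (I * b) = exp (I * b) * (exp (I * ↑(a - b)) - 1) := by
    rw [mul_sub, mul_one, ← exp_add]; push_cast; ring_nf
  rw [h, norm_mul, norm_exp_I_mul_ofReal, one_mul, ← Real.norm_eq_abs]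
  exact Real.norm_exp_I_mul_ofReal_sub_one_le

namespace MatrixHalfexpPath

noncomputable section

def ω : ℂ := exp (2 * π * I / 3)

lemma isPrimitiveRoot_ω : IsPrimitiveRoot ω 3 := isPrimitiveRoot_exp 3 (by norm_num)

lemma conj_ω : conj ω = ω ^ 2 := by
  have h : conj ω * ω = ω ^ 2 * ω := by
    rw [conj_mul', isPrimitiveRoot_ω.norm'_eq_one (by norm_num), ofReal_one, one_pow]
    linear_combination -isPrimitiveRoot_ω.pow_eq_one
  exact mul_right_cancel₀ (isPrimitiveRoot_ω.ne_zero (by norm_num)) h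

def dft : Matrix (Fin 3) (Fin 3) ℂ := !![1, 1, 1; 1, ω, ω ^ 2; 1, ω ^ 2, ω]

def cyclicPerm : Matrix (Fin 3) (Fin 3) ℂ := !![0, 1, 0; 0, 0, 1; 1, 0, 0]

lemma star_dft_mul_dft : star dft * dft = (3 : ℂ) • 1 := by
  have h₃ := isPrimitiveRoot_ω.pow_eq_one
  have hsum : 1 + ω + ω ^ 2 = 0 := by
    simpa [Finset.sum_range_succ] using isPrimitiveRoot_ω.geom_sum_eq_zero (by norm_num)
  ext i j
  fin_cases i <;> fin_cases j <;>
    simp [dft, conj_ω, Matrix.mul_apply, Fin.sum_univ_three] <;> grind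

lemma dft_mul_diagonal : dft * diagonal ![1, ω, ω ^ 2] = cyclicPerm * dft := by
  have h₃ := isPrimitiveRoot_ω.pow_eq_one
  ext i j
  fin_cases i <;> fin_cases j <;>
    simp [dft, cyclicPerm, Matrix.mul_apply, Fin.sum_univ_three] <;> grind

def fourier : Matrix (Fin 3) (Fin 3) ℂ := (√3)⁻¹ • dft

lemma fourier_mem_unitary : fourier ∈ unitary (Matrix (Fin 3) (Fin 3) ℂ) := by
  rw [← Matrix.unitaryGroup, Matrix.mem_unitaryGroup_iff', fourier, star_smul, star_trivial,
    smul_mul_smul, star_dft_mul_dft, ← smul_assoc, Complex.real_smul, ← mul_inv,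
    Real.mul_self_sqrt (by norm_num)]
  norm_num

lemma fourier_mul_diagonal : fourier * diagonal ![1, ω, ω ^ 2] = cyclicPerm * fourier := by
  rw [fourier, smul_mul_assoc, dft_mul_diagonal, mul_smul_comm]

def eigenangle : Fin 3 → ℝ := ![0, 2 * π / 3, -(2 * π / 3)]

def eigenvalues (t : ℝ) : Fin 3 → ℂ := fun k => exp (I * ↑(eigenangle k * t))

lemma eigenvalues_mem_unitary (t : ℝ) : eigenvalues t ∈ unitary (Fin 3 → ℂ) := by
  rw [Unitary.mem_iff_star_mul_self]
  ext k
  rw [Pi.mul_apply, Pi.star_apply, Complex.star_def, conj_mul', eigenvalues,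
    norm_exp_I_mul_ofReal]
  simp

lemma eigenvalues_zero : eigenvalues 0 = 1 := by
  ext k; simp [eigenvalues]

lemma eigenvalues_one : eigenvalues 1 = ![1, ω, ω ^ 2] := by
  ext k
  fin_cases k
  · simp [eigenvalues, eigenangle]
  · simp only [eigenvalues, eigenangle, ω]; congr 1; push_cast; ring
  · rw [← conj_ω, ω, ← Complex.exp_conj]
    simp only [eigenvalues, eigenangle]; congr 1
    simp [map_ofNat]; ring

lemma norm_eigenvalues_sub_le (t s : ℝ) :
    ‖eigenvalues t - eigenvalues s‖ ≤ 2 * π / 3 * |t - s| := by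
  refine (pi_norm_le_iff_of_nonneg (by positivity)).2 fun k => ?_
  refine (norm_exp_I_mul_ofReal_sub_le _ _).trans ?_
  rw [← mul_sub, abs_mul]
  gcongr
  fin_cases k <;> simp [eigenangle, abs_div, abs_of_pos Real.pi_pos]; positivity

/-- `rotation t = exp (i t h)` for the `h` of the paper, with `‖h‖ = 2π/3` and `exp (i h) = P`. -/
def rotation (t : ℝ) : Matrix (Fin 3) (Fin 3) ℂ := fourier * diagonal (eigenvalues t) * star fourier

lemma rotation_mem_unitary (t : ℝ) : rotation t ∈ unitary (Matrix (Fin 3) (Fin 3) ℂ) := by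
  refine mul_mem (mul_mem fourier_mem_unitary ?_) (Unitary.star_mem fourier_mem_unitary)
  exact Unitary.map_mem (diagonalStarAlgHom (Fin 3) ℂ ℂ) (eigenvalues_mem_unitary t)

lemma rotation_zero : rotation 0 = 1 := by
  simp [rotation, eigenvalues_zero, Unitary.mul_star_self_of_mem fourier_mem_unitary]

lemma rotation_one : rotation 1 = cyclicPerm := by
  rw [rotation, eigenvalues_one, fourier_mul_diagonal, mul_assoc,
    Unitary.mul_star_self_of_mem fourier_mem_unitary, mul_one]

lemma cyclicPerm_map_mul_diagonal_mul_star {α : Type*} [Ring α] [StarRing α] [Algebra ℂ α]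
    (d : Fin 3 → α) :
    cyclicPerm.map (algebraMap ℂ α) * diagonal d * star (cyclicPerm.map (algebraMap ℂ α)) =
      diagonal ![d 1, d 2, d 0] := by
  ext i j
  fin_cases i <;> fin_cases j <;>
    simp [cyclicPerm, Matrix.mul_apply, Fin.sum_univ_three, star_eq_conjTranspose]

lemma commute_map_algebraMap_diagonal_const {n R α : Type*} [Fintype n] [DecidableEq n]
    [CommSemiring R] [Semiring α] [Algebra R α] (M : Matrix n n R) (a : α) :
    Commute (M.map (algebraMap R α)) (diagonal fun _ => a) := by
  ext i j
  simp [mul_diagonal, diagonal_mul, Algebra.commutes]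

section Twist

variable {A : Type*} [CStarAlgebra A] {z : A}

lemma twist_mem_unitary (hz : z ∈ unitary A) : ![star z, z, 1] ∈ unitary (Fin 3 → A) := by
  obtain ⟨h₁, h₂⟩ := Unitary.mem_iff.mp hz
  refine Unitary.mem_iff.mpr ⟨?_, ?_⟩ <;> ext i <;> fin_cases i <;> simp [h₁, h₂]

lemma cyclicPerm_conj_twist_mul_star (z : A) :
    cyclicPerm.map (algebraMap ℂ A) * diagonal ![star z, z, 1] *
        star (cyclicPerm.map (algebraMap ℂ A)) * star (diagonal ![star z, z, 1]) =
      diagonal ![z * z, star z, star z] := by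
  rw [cyclicPerm_map_mul_diagonal_mul_star, star_eq_conjTranspose, diagonal_conjTranspose,
    diagonal_mul_diagonal]
  congr 1; ext i; fin_cases i <;> simp

end Twist

section Embedding

variable {A B : Type*} [CStarAlgebra A] [CStarAlgebra B]
  (φ : Matrix (Fin 3) (Fin 3) A ≃⋆ₐ[ℂ] B)

def scalarEmbedding : Matrix (Fin 3) (Fin 3) ℂ →⋆ₐ[ℂ] B :=
  (φ : Matrix (Fin 3) (Fin 3) A →⋆ₐ[ℂ] B).comp (StarAlgHom.ofId ℂ A).mapMatrix

def rotationPath (t : ℝ) : unitary B :=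
  ⟨scalarEmbedding φ (rotation t), Unitary.map_mem _ (rotation_mem_unitary t)⟩

lemma rotationPath_zero : rotationPath φ 0 = 1 := by
  ext; simp [rotationPath, rotation_zero]

lemma rotationPath_one : (rotationPath φ 1 : B) = φ (cyclicPerm.map (algebraMap ℂ A)) := by
  change scalarEmbedding φ (rotation 1) = _
  rw [rotation_one]; rfl

lemma norm_rotationPath_sub_le (t s : ℝ) :
    ‖(rotationPath φ t : B) - rotationPath φ s‖ ≤ 2 * π / 3 * |t - s| := by
  set ψ := scalarEmbedding φ
  have hF := Unitary.map_mem ψ fourier_mem_unitary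
  calc ‖(rotationPath φ t : B) - rotationPath φ s‖
      = ‖ψ fourier * ψ (diagonal (eigenvalues t - eigenvalues s)) * star (ψ fourier)‖ := by
        rw [← map_star, ← map_mul, ← map_mul]
        simp only [rotationPath, rotation, ← map_sub, ← sub_mul, ← mul_sub, diagonal_sub]; rfl
    _ = ‖ψ (diagonal (eigenvalues t - eigenvalues s))‖ := by
        rw [CStarRing.norm_mul_mem_unitary _ (Unitary.star_mem hF),
          CStarRing.norm_mem_unitary_mul _ hF]
    _ ≤ ‖eigenvalues t - eigenvalues s‖ := norm_map_diagonal_le ψ _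
    _ ≤ 2 * π / 3 * |t - s| := norm_eigenvalues_sub_le t s

lemma commute_rotationPath (t : ℝ) (a : A) :
    Commute (rotationPath φ t : B) (φ (diagonal fun _ => a)) :=
  (commute_map_algebraMap_diagonal_const (rotation t) a).map φ

/-- The paper's `v`, with its entries ordered to match the direction of `cyclicPerm`. -/
def twistUnitary {z : A} (hz : z ∈ unitary A) : unitary B :=
  ⟨φ (diagonal ![star z, z, 1]), Unitary.map_mem
    ((φ : Matrix (Fin 3) (Fin 3) A →⋆ₐ[ℂ] B).comp (diagonalStarAlgHom (Fin 3) ℂ A))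
    (twist_mem_unitary hz)⟩

lemma norm_twistUnitary_commutator_le {z : A} (hz : z ∈ unitary A) (a : A) :
    ‖(twistUnitary φ hz : B) * φ (diagonal fun _ => a) -
        φ (diagonal fun _ => a) * twistUnitary φ hz‖ ≤ ‖z * a - a * z‖ := by
  set v : Fin 3 → A := ![star z, z, 1]
  set c : Fin 3 → A := fun _ => a
  have hv : ‖v * c - c * v‖ ≤ ‖z * a - a * z‖ := by
    refine (pi_norm_le_iff_of_nonneg (norm_nonneg _)).2 fun i => ?_
    fin_cases i
    · simpa [v, c] using (Unitary.norm_star_mul_sub_mul_star ⟨z, hz⟩ a).le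
    · simp [v, c]
    · simp [v, c]
  calc _ = ‖φ (diagonal (v * c - c * v))‖ := by
        change ‖φ (diagonal v) * φ (diagonal c) - φ (diagonal c) * φ (diagonal v)‖ = _
        rw [← map_mul, ← map_mul, ← map_sub, diagonal_mul_diagonal, diagonal_mul_diagonal,
          diagonal_sub]; rfl
    _ ≤ ‖z * a - a * z‖ := (norm_map_diagonal_le (φ : _ →⋆ₐ[ℂ] B) _).trans hv

end Embedding

end

end MatrixHalfexpPath

open MatrixHalfexpPath Matrix

/-- Let `A` be a unital C*-algebra and `z ∈ A` a unitary, and realize `M₃(A)` with its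
C*-norm as a unital C*-algebra `B` via a *-algebra isomorphism `φ : M₃(A) ≅ B`. Then
there is a continuous path `u : [0,1] → U(M₃(A))` with `u(0) = 1`,
`u(1) = diag(z², z*, z*)`, length at most `4π/3`, and
`‖[u(t), diag(a,a,a)]‖ ≤ 2‖[z,a]‖` for all `a ∈ A`, `t ∈ [0,1]`. -/
theorem matrix_halfexp_path {A B : Type*} [CStarAlgebra A] [CStarAlgebra B]
    (φ : Matrix (Fin 3) (Fin 3) A ≃⋆ₐ[ℂ] B)
    (z : A) (hz : z ∈ unitary A) :
    ∃ u : ℝ → B,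
      ContinuousOn u (Set.Icc 0 1) ∧
      (∀ t ∈ Set.Icc (0:ℝ) 1, u t ∈ unitary B) ∧
      u 0 = 1 ∧
      u 1 = φ (Matrix.diagonal ![z * z, star z, star z]) ∧
      eVariationOn u (Set.Icc 0 1) ≤ ENNReal.ofReal (4 * Real.pi / 3) ∧
      ∀ a : A, ∀ t ∈ Set.Icc (0:ℝ) 1,
        ‖u t * φ (Matrix.diagonal ![a, a, a]) - φ (Matrix.diagonal ![a, a, a]) * u t‖ ≤
          2 * ‖z * a - a * z‖ := by
  set V := twistUnitary φ hz
  let u : ℝ → B := fun t => (⁅rotationPath φ t, V⁆ : unitary B)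
  have hlip : LipschitzWith (4 * π / 3).toNNReal u := .of_dist_le' fun t s => by
    rw [dist_eq_norm, dist_eq_norm, Real.norm_eq_abs]
    calc ‖u t - u s‖ ≤ 2 * ‖(rotationPath φ t : B) - rotationPath φ s‖ :=
          Unitary.norm_commutatorElement_sub_le _ _ _
      _ ≤ 2 * (2 * π / 3 * |t - s|) := by gcongr; exact norm_rotationPath_sub_le φ t s
      _ = 4 * π / 3 * |t - s| := by ring
  refine ⟨u, hlip.continuous.continuousOn, fun t _ => (⁅rotationPath φ t, V⁆ : unitary B).2,
    ?_, ?_, ?_, fun a t _ => ?_⟩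
  · simp [u, rotationPath_zero]
  · rw [← cyclicPerm_conj_twist_mul_star]
    simp [u, V, twistUnitary, Unitary.coe_commutatorElement, rotationPath_one, map_mul, map_star]
  · simpa [ENNReal.ofReal] using hlip.lipschitzOnWith.eVariationOn_Icc_le (a := 0) (b := 1)
  · have hconst : ![a, a, a] = fun _ => a := by ext i; fin_cases i <;> rfl
    rw [hconst]
    calc _ ≤ 2 * ‖(V : B) * φ (diagonal fun _ => a) - φ (diagonal fun _ => a) * V‖ :=
          Unitary.norm_commutatorElement_mul_sub_le V (commute_rotationPath φ t a)
      _ ≤ 2 * ‖z * a - a * z‖ := by gcongr; exact norm_twistUnitary_commutator_le φ hz a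
end

section
/- Let K ⊂ ℂ be a compact subset and f : K → ℂ a continuous function. For every ε > 0 there exists η > 0 with the following property: whenever A is a unital C*-algebra, x ∈ A is a normal element with sp(x) ⊆ K, and y ∈ A is a contraction with ‖[x,y]‖ ≤ η and ‖[x*,y]‖ ≤ η, then ‖[f(x), y]‖ ≤ ε. -/
/-!
Call `g` commutator-bounded on `K` if `‖[g(x), y]‖ ≤ C · max ‖[x, y]‖ ‖[x*, y]‖` for all normal `x`
with spectrum in `K` and all `y`, in every C*-algebra. This class contains `z` and the constants and
is closed under sums, under products (Leibniz rule together with `‖g(x)‖ ≤ sup_K ‖g‖`), and under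
conjugation (taking adjoints exchanges `[x, y*]` with `[x*, y]` up to sign). So it contains every
polynomial in `z` and `z̄`, and these are uniformly dense in `C(K)` by Stone–Weierstrass. If
`‖f - g‖ ≤ ε/3` on `K`, then `‖[f(x) - g(x), y]‖ ≤ 2ε/3` for a contraction `y`, and the
commutator bound of `g` handles the remaining `ε/3`.
-/

universe u

open ContinuousMap

lemma norm_star_mul_sub_mul_star {E : Type*} [NonUnitalNormedRing E] [StarRing E]
    [NormedStarGroup E] (a y : E) :
    ‖star a * y - y * star a‖ = ‖a * star y - star y * a‖ := by
  rw [← norm_star, ← norm_neg]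
  simp only [star_sub, star_mul, star_star, neg_sub]

lemma norm_mul_sub_mul_le_add {E : Type*} [NonUnitalNormedRing E] (a b y : E) :
    ‖a * y - y * a‖ ≤ ‖b * y - y * b‖ + 2 * ‖a - b‖ * ‖y‖ := by
  have hsplit : a * y - y * a = (b * y - y * b) + ((a - b) * y - y * (a - b)) := by noncomm_ring
  rw [hsplit]
  refine (norm_add_le _ _).trans (add_le_add le_rfl ?_)
  calc ‖(a - b) * y - y * (a - b)‖ ≤ ‖a - b‖ * ‖y‖ + ‖y‖ * ‖a - b‖ :=
        (norm_sub_le _ _).trans (add_le_add (norm_mul_le _ _) (norm_mul_le _ _))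
    _ = 2 * ‖a - b‖ * ‖y‖ := by ring

def HasCommutatorBound (K : Set ℂ) (g : ℂ → ℂ) (C : ℝ) : Prop :=
  ∀ ⦃A : Type u⦄ [CStarAlgebra A] (x y : A), IsStarNormal x → spectrum ℂ x ⊆ K →
    ‖cfc g x * y - y * cfc g x‖ ≤ C * max ‖x * y - y * x‖ ‖star x * y - y * star x‖

namespace HasCommutatorBound

variable {K : Set ℂ} {g g₁ g₂ : ℂ → ℂ} {C C₁ C₂ : ℝ}

lemma mono (h : HasCommutatorBound.{u} K g C) {C' : ℝ} (hC : C ≤ C') :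
    HasCommutatorBound.{u} K g C' := fun _ _ x y hx hxK =>
  (h x y hx hxK).trans <| mul_le_mul_of_nonneg_right hC <|
    (norm_nonneg _).trans (le_max_left _ _)

protected lemma id : HasCommutatorBound.{u} K id 1 := fun _ _ x y hx _ => by
  rw [cfc_id ℂ x, one_mul]
  exact le_max_left _ _

protected lemma const (c : ℂ) : HasCommutatorBound.{u} K (fun _ => c) 0 := fun _ _ x y _ _ => by
  rw [cfc_const c x, Algebra.commutes c y, sub_self, norm_zero, zero_mul]

protected lemma add (h₁ : HasCommutatorBound.{u} K g₁ C₁) (h₂ : HasCommutatorBound.{u} K g₂ C₂)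
    (hg₁ : ContinuousOn g₁ K) (hg₂ : ContinuousOn g₂ K) :
    HasCommutatorBound.{u} K (fun z => g₁ z + g₂ z) (C₁ + C₂) := fun _ _ x y hx hxK => by
  rw [cfc_add (a := x) g₁ g₂ (hg₁.mono hxK) (hg₂.mono hxK), add_mul]
  refine le_of_le_of_eq ?_ (add_mul C₁ C₂ _).symm
  calc _ = ‖(cfc g₁ x * y - y * cfc g₁ x) + (cfc g₂ x * y - y * cfc g₂ x)‖ := by
        congr 1; noncomm_ring
    _ ≤ _ := (norm_add_le _ _).trans (add_le_add (h₁ x y hx hxK) (h₂ x y hx hxK))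

protected lemma mul (h₁ : HasCommutatorBound.{u} K g₁ C₁) (h₂ : HasCommutatorBound.{u} K g₂ C₂)
    (hg₁ : ContinuousOn g₁ K) (hg₂ : ContinuousOn g₂ K) {M₁ M₂ : ℝ} (hM₁ : 0 ≤ M₁)
    (hM₂ : 0 ≤ M₂) (hgM₁ : ∀ z ∈ K, ‖g₁ z‖ ≤ M₁) (hgM₂ : ∀ z ∈ K, ‖g₂ z‖ ≤ M₂) :
    HasCommutatorBound.{u} K (fun z => g₁ z * g₂ z) (M₁ * C₂ + C₁ * M₂) :=
  fun _ _ x y hx hxK => by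
  rw [cfc_mul g₁ g₂ x (hg₁.mono hxK) (hg₂.mono hxK)]
  set a := cfc g₁ x
  set b := cfc g₂ x
  set m := max ‖x * y - y * x‖ ‖star x * y - y * star x‖
  have ha : ‖a‖ ≤ M₁ := norm_cfc_le hM₁ fun z hz => hgM₁ z (hxK hz)
  have hb : ‖b‖ ≤ M₂ := norm_cfc_le hM₂ fun z hz => hgM₂ z (hxK hz)
  have hby : ‖b * y - y * b‖ ≤ C₂ * m := h₂ x y hx hxK
  have hay : ‖a * y - y * a‖ ≤ C₁ * m := h₁ x y hx hxK
  calc ‖a * b * y - y * (a * b)‖ = ‖a * (b * y - y * b) + (a * y - y * a) * b‖ := by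
        congr 1; noncomm_ring
    _ ≤ ‖a‖ * ‖b * y - y * b‖ + ‖a * y - y * a‖ * ‖b‖ :=
        (norm_add_le _ _).trans (add_le_add (norm_mul_le _ _) (norm_mul_le _ _))
    _ ≤ M₁ * (C₂ * m) + C₁ * m * M₂ :=
        add_le_add (mul_le_mul ha hby (norm_nonneg _) hM₁)
          (mul_le_mul hay hb (norm_nonneg _) ((norm_nonneg _).trans hay))
    _ = (M₁ * C₂ + C₁ * M₂) * m := by ring

protected lemma star (h : HasCommutatorBound.{u} K g C) :
    HasCommutatorBound.{u} K (fun z => star (g z)) C := fun _ _ x y hx hxK => by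
  have hxy : ‖star x * star y - star y * star x‖ = ‖x * y - y * x‖ := by
    simpa using (norm_star_mul_sub_mul_star (star x) y).symm
  rw [cfc_star, norm_star_mul_sub_mul_star, norm_star_mul_sub_mul_star x y, max_comm, ← hxy]
  exact h x (star y) hx hxK

end HasCommutatorBound

lemma exists_hasCommutatorBound_of_mem_adjoin {K : Set ℂ} (hK : IsCompact K) {g : C(K, ℂ)}
    (hg : g ∈ StarAlgebra.adjoin ℂ {restrict K (.id ℂ)}) :
    ∃ G : ℂ → ℂ, ContinuousOn G K ∧ (∀ z : K, G z = g z) ∧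
      ∃ C, HasCommutatorBound.{u} K G C := by
  induction hg using StarAlgebra.adjoin_induction with
  | mem g hg =>
    rw [Set.mem_singleton_iff.mp hg]
    exact ⟨_root_.id, continuousOn_id, fun _ => rfl, 1, .id⟩
  | algebraMap c =>
    exact ⟨fun _ => c, continuousOn_const, fun _ => rfl, 0, .const c⟩
  | add g₁ g₂ _ _ ih₁ ih₂ =>
    obtain ⟨G₁, hG₁, hGg₁, C₁, hC₁⟩ := ih₁
    obtain ⟨G₂, hG₂, hGg₂, C₂, hC₂⟩ := ih₂
    exact ⟨_, hG₁.add hG₂, fun z => by simp [hGg₁, hGg₂], _, hC₁.add hC₂ hG₁ hG₂⟩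
  | mul g₁ g₂ _ _ ih₁ ih₂ =>
    obtain ⟨G₁, hG₁, hGg₁, C₁, hC₁⟩ := ih₁
    obtain ⟨G₂, hG₂, hGg₂, C₂, hC₂⟩ := ih₂
    obtain ⟨M₁, hM₁⟩ := hK.exists_bound_of_continuousOn hG₁
    obtain ⟨M₂, hM₂⟩ := hK.exists_bound_of_continuousOn hG₂
    exact ⟨_, hG₁.mul hG₂, fun z => by simp [hGg₁, hGg₂], _,
      hC₁.mul hC₂ hG₁ hG₂ (le_max_right M₁ 0) (le_max_right M₂ 0)
        (fun z hz => (hM₁ z hz).trans (le_max_left _ _))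
        (fun z hz => (hM₂ z hz).trans (le_max_left _ _))⟩
  | star g _ ih =>
    obtain ⟨G, hG, hGg, C, hC⟩ := ih
    exact ⟨_, hG.star, fun z => by simp [hGg], C, hC.star⟩

lemma exists_hasCommutatorBound_near {K : Set ℂ} (hK : IsCompact K) {f : ℂ → ℂ}
    (hf : ContinuousOn f K) {δ : ℝ} (hδ : 0 < δ) :
    ∃ G : ℂ → ℂ, ContinuousOn G K ∧ (∀ z ∈ K, ‖f z - G z‖ ≤ δ) ∧
      ∃ C, 0 ≤ C ∧ HasCommutatorBound.{u} K G C := by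
  have : CompactSpace K := isCompact_iff_compactSpace.mp hK
  let f' : C(K, ℂ) := ⟨K.domRestrict f, hf.domRestrict⟩
  have hdense : f' ∈ closure (StarAlgebra.adjoin ℂ {restrict K (.id ℂ)} : Set C(K, ℂ)) := by
    rw [← StarSubalgebra.topologicalClosure_coe, ← StarAlgebra.elemental,
      elemental_id_eq_top]
    trivial
  obtain ⟨g, hg, hfg⟩ := Metric.mem_closure_iff.mp hdense δ hδ
  obtain ⟨G, hG, hGg, C, hC⟩ := exists_hasCommutatorBound_of_mem_adjoin hK hg
  refine ⟨G, hG, fun z hz => ?_, max C 0, le_max_right _ _, hC.mono (le_max_left _ _)⟩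
  calc ‖f z - G z‖ = ‖(f' - g) ⟨z, hz⟩‖ := by rw [ContinuousMap.sub_apply, ← hGg]; rfl
    _ ≤ ‖f' - g‖ := norm_coe_le_norm _ _
    _ ≤ δ := by rw [← dist_eq_norm]; exact hfg.le

/-- Let `K ⊂ ℂ` be compact and `f : K → ℂ` continuous. For every `ε > 0` there exists
`η > 0` such that for any unital C*-algebra `A`, any normal element `x ∈ A` with
`sp(x) ⊆ K`, and any contraction `y ∈ A` with `‖[x,y]‖ ≤ η` and `‖[x*,y]‖ ≤ η`, one has
`‖[f(x), y]‖ ≤ ε`. -/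
theorem commutator_functional_calculus_estimate
    (K : Set ℂ) (hK : IsCompact K) (f : ℂ → ℂ) (hf : ContinuousOn f K) :
    ∀ ε > (0 : ℝ), ∃ η > (0 : ℝ),
      ∀ (A : Type u) [CStarAlgebra A], ∀ x y : A,
        IsStarNormal x → spectrum ℂ x ⊆ K → ‖y‖ ≤ 1 →
        ‖x * y - y * x‖ ≤ η → ‖star x * y - y * star x‖ ≤ η →
        ‖cfc f x * y - y * cfc f x‖ ≤ ε := by
  intro ε hε
  obtain ⟨G, hG, hfG, C, hC₀, hC⟩ :=
    exists_hasCommutatorBound_near.{u} hK hf (δ := ε / 3) (by positivity)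
  refine ⟨ε / (3 * (C + 1)), by positivity, fun A _ x y hx hxK hy h₁ h₂ => ?_⟩
  have happrox : ‖cfc f x - cfc G x‖ ≤ ε / 3 := by
    rw [← cfc_sub f G x (hf.mono hxK) (hG.mono hxK)]
    exact norm_cfc_le (by positivity) fun z hz => hfG z (hxK hz)
  have hCη : C * (ε / (3 * (C + 1))) ≤ ε / 3 := by
    rw [mul_div_assoc', div_le_div_iff₀ (by positivity) (by positivity)]
    nlinarith
  calc ‖cfc f x * y - y * cfc f x‖
      ≤ ‖cfc G x * y - y * cfc G x‖ + 2 * ‖cfc f x - cfc G x‖ * ‖y‖ :=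
        norm_mul_sub_mul_le_add _ _ _
    _ ≤ C * (ε / (3 * (C + 1))) + 2 * (ε / 3) * 1 := by
        gcongr
        exact (hC x y hx hxK).trans (by gcongr; exact max_le h₁ h₂)
    _ ≤ ε := by linarith
end
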